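/- Main amortized analysis theorem: for all lists bl and fl, the batched queue with state (bl, fl) is amortized-equivalent (≈) to step (length bl) applied to the single-list specification queue on fl ++ reverse bl. -/

import Mathlib

/-- The polynomial functor whose final coalgebra is the coinductive queue
interface: `quit : ℕ`, `enqueue : E → Queue`, `dequeue : ℕ × (Option E × Queue)`.
A node carries `(quit cost, dequeue cost, dequeued element)` and has children
indexed by `Option E`: `some e` is the queue after enqueuing `e`, `none` is the
successor queue after dequeuing. -/
def QueueF (E : Type) : PFunctor := ⟨ℕ × ℕ × Option E, fun _ => Option E⟩

/-- The coinductive queue interface: the final coalgebra of `QueueF`. -/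
def Queue (E : Type) : Type := (QueueF E).M

namespace Queue

variable {E : Type}

/-- The final cost. -/
def quit (q : Queue E) : ℕ := (PFunctor.M.dest q).1.1

/-- The cost of the next dequeue. -/
def deqCost (q : Queue E) : ℕ := (PFunctor.M.dest q).1.2.1

/-- The optional element returned by the next dequeue. -/
def deqElem (q : Queue E) : Option E := (PFunctor.M.dest q).1.2.2

/-- The queue after enqueuing an element. -/
def enqueue (q : Queue E) (e : E) : Queue E := (PFunctor.M.dest q).2 (some e)

/-- The successor queue after dequeuing. -/
def deqNext (q : Queue E) : Queue E := (PFunctor.M.dest q).2 none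

/-- The dequeue method: a cost paired with an optional element and successor queue. -/
def dequeue (q : Queue E) : ℕ × (Option E × Queue E) := (deqCost q, deqElem q, deqNext q)

/-- `step c q` adds cost `c` to the `quit` cost and to the cost of the first
`dequeue`, and propagates `step c` through `enqueue`. -/
def step (c : ℕ) (q : Queue E) : Queue E :=
  PFunctor.M.corec
    (fun s : ℕ × Queue E =>
      ⟨(s.1 + quit s.2, s.1 + deqCost s.2, deqElem s.2),
       fun o =>
         match o with
         | some e => (s.1, enqueue s.2 e)
         | none => (0, deqNext s.2)⟩)
    (c, q)

/-- A relation is a bisimulation if related queues have equal observations and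
related successors. -/
def IsBisim (R : Queue E → Queue E → Prop) : Prop :=
  ∀ q₁ q₂, R q₁ q₂ →
    quit q₁ = quit q₂ ∧
    (∀ e, R (enqueue q₁ e) (enqueue q₂ e)) ∧
    deqCost q₁ = deqCost q₂ ∧
    deqElem q₁ = deqElem q₂ ∧
    R (deqNext q₁) (deqNext q₂)

/-- Bisimilarity: the largest bisimulation. -/
def Bisim (q₁ q₂ : Queue E) : Prop := ∃ R, IsBisim R ∧ R q₁ q₂

/-- A relation is an amortized bisimulation if related queues have equal quit
costs, related enqueues, equal dequeued elements, and successors related after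
pushing the respective dequeue costs onto them via `step`. -/
def IsAmortizedBisim (R : Queue E → Queue E → Prop) : Prop :=
  ∀ q₁ q₂, R q₁ q₂ →
    quit q₁ = quit q₂ ∧
    (∀ e, R (enqueue q₁ e) (enqueue q₂ e)) ∧
    deqElem q₁ = deqElem q₂ ∧
    R (step (deqCost q₁) (deqNext q₁)) (step (deqCost q₂) (deqNext q₂))

/-- Amortized equivalence `≈`: the largest amortized bisimulation. -/
def AmortEquiv (q₁ q₂ : Queue E) : Prop := ∃ R, IsAmortizedBisim R ∧ R q₁ q₂

/-- The single-list specification queue, with a pending cost `c` already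
`step`ped onto it.  `quit (QUEUEaux (c, l)) = c`; enqueue costs `1` (added to
the pending cost) and appends to the end; dequeue costs the pending cost and
removes the head. -/
def QUEUEaux : ℕ × List E → Queue E :=
  PFunctor.M.corec fun s =>
    match s with
    | (c, []) =>
      ⟨(c, c, none), fun o =>
        match o with
        | some e => (c + 1, [e])
        | none => (0, [])⟩
    | (c, e :: l) =>
      ⟨(c, c, some e), fun o =>
        match o with
        | some e' => (c + 1, e :: (l ++ [e']))
        | none => (0, l)⟩

/-- The single-list specification queue: `quit` costs 0, `enqueue e` is
`step 1` of the queue on `l ++ [e]`, `dequeue` costs 0 and removes the head. -/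
def QUEUE (l : List E) : Queue E := QUEUEaux (0, l)

/-- The batched queue on state `(bl, fl)`: `quit` pays the potential
`length bl`; `enqueue` conses onto `bl` for free; `dequeue` pops the head of
`fl` for free, or, if `fl` is empty, reverses `bl` at cost `length bl`. -/
def batchedQueue : List E × List E → Queue E :=
  PFunctor.M.corec fun s =>
    match s with
    | (bl, e :: fl) =>
      ⟨(bl.length, 0, some e), fun o =>
        match o with
        | some e' => (e' :: bl, e :: fl)
        | none => (bl, fl)⟩
    | (bl, []) =>
      match bl.reverse with
      | [] =>
        ⟨(bl.length, 0, none), fun o =>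
          match o with
          | some e' => (e' :: bl, [])
          | none => ([], [])⟩
      | e :: fl' =>
        ⟨(bl.length, bl.length, some e), fun o =>
          match o with
          | some e' => (e' :: bl, [])
          | none => ([], fl')⟩

end Queue

/-- Finite queue programs: return, enqueue an element and continue, or dequeue
and continue with a cost and program depending on the dequeued element. -/
inductive Program (E : Type) : Type
  | ret : Program E
  | enq : E → Program E → Program E
  | deq : (Option E → ℕ) → (Option E → Program E) → Program E

namespace Queue

/-- Evaluation of a program on a queue, summing all incurred costs including
the final `quit` cost. -/
def psi {E : Type} : Program E → Queue E → ℕ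
  | .ret, q => quit q
  | .enq e p, q => psi p (enqueue q e)
  | .deq c f, q =>
    deqCost q + c (deqElem q) + psi (f (deqElem q)) (deqNext q)

end Queue

/-!
Take `length bl` as the potential of the batched queue. Enqueueing onto `bl` is free but raises
the potential by one, matching the specification's `step 1`; popping from a nonempty front list
is free on both sides; and reversing `bl` costs `length bl`, which is exactly the cost pending in
front of the specification queue. Hence the pairs
`(batchedQueue (bl, fl), step (length bl) (QUEUE (fl ++ reverse bl)))` form an amortized
bisimulation, once successors are only required to be related after a common `step`.
-/

namespace Queue

variable {E : Type}

theorem eq_of_bisim {q₁ q₂ : Queue E} (h : Bisim q₁ q₂) : q₁ = q₂ := by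
  obtain ⟨R, hR, hq⟩ := h
  refine PFunctor.M.bisim R (fun x y hxy => ?_) q₁ q₂ hq
  obtain ⟨hquit, henq, hcost, helem, hnext⟩ := hR x y hxy
  have hhead : (PFunctor.M.dest x).1 = (PFunctor.M.dest y).1 :=
    Prod.ext hquit (Prod.ext hcost helem)
  refine ⟨_, (PFunctor.M.dest x).2, (PFunctor.M.dest y).2, rfl, by rw [hhead]; rfl, ?_⟩
  rintro (_ | e)
  exacts [hnext, henq e]

theorem dest_step (c : ℕ) (q : Queue E) :
    PFunctor.M.dest (step c q) =
      (⟨(c + quit q, c + deqCost q, deqElem q),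
        Option.elim' (step 0 (deqNext q)) (fun e => step c (enqueue q e))⟩ : QueueF E (Queue E)) :=
  (PFunctor.M.dest_corec _ _).trans (congrArg _ (funext (Option.rec rfl fun _ => rfl)))

@[simp] theorem quit_step (c : ℕ) (q : Queue E) : quit (step c q) = c + quit q := by
  rw [quit, dest_step]

@[simp] theorem deqCost_step (c : ℕ) (q : Queue E) : deqCost (step c q) = c + deqCost q := by
  rw [deqCost, dest_step]

@[simp] theorem deqElem_step (c : ℕ) (q : Queue E) : deqElem (step c q) = deqElem q := by
  rw [deqElem, dest_step]

@[simp] theorem enqueue_step (c : ℕ) (q : Queue E) (e : E) :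
    enqueue (step c q) e = step c (enqueue q e) := by
  rw [enqueue, dest_step]; rfl

@[simp] theorem deqNext_step (c : ℕ) (q : Queue E) : deqNext (step c q) = step 0 (deqNext q) := by
  rw [deqNext, dest_step]; rfl

@[simp] theorem step_zero (q : Queue E) : step 0 q = q :=
  eq_of_bisim ⟨fun x y => x = step 0 y, by rintro _ y rfl; simp, rfl⟩

@[simp] theorem step_step (a b : ℕ) (q : Queue E) : step a (step b q) = step (a + b) q := by
  refine eq_of_bisim ⟨fun x y => ∃ a b q, x = step a (step b q) ∧ y = step (a + b) q,
    ?_, a, b, q, rfl, rfl⟩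
  rintro _ _ ⟨a, b, q, rfl, rfl⟩
  exact ⟨by simp [Nat.add_assoc], fun e => ⟨a, b, enqueue q e, by simp⟩, by simp [Nat.add_assoc],
    by simp, 0, 0, deqNext q, by simp⟩

theorem dest_QUEUEaux (c : ℕ) (l : List E) :
    PFunctor.M.dest (QUEUEaux (c, l)) =
      (⟨(c, c, l.head?), Option.elim' (QUEUEaux (0, l.tail)) (fun e => QUEUEaux (c + 1, l ++ [e]))⟩ :
        QueueF E (Queue E)) := by
  cases l <;>
    exact (PFunctor.M.dest_corec _ _).trans (congrArg _ (funext (Option.rec rfl fun _ => rfl)))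

@[simp] theorem quit_QUEUEaux (c : ℕ) (l : List E) : quit (QUEUEaux (c, l)) = c := by
  rw [quit, dest_QUEUEaux]

@[simp] theorem deqCost_QUEUEaux (c : ℕ) (l : List E) : deqCost (QUEUEaux (c, l)) = c := by
  rw [deqCost, dest_QUEUEaux]

@[simp] theorem deqElem_QUEUEaux (c : ℕ) (l : List E) : deqElem (QUEUEaux (c, l)) = l.head? := by
  rw [deqElem, dest_QUEUEaux]

@[simp] theorem enqueue_QUEUEaux (c : ℕ) (l : List E) (e : E) :
    enqueue (QUEUEaux (c, l)) e = QUEUEaux (c + 1, l ++ [e]) := by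
  rw [enqueue, dest_QUEUEaux]; rfl

@[simp] theorem deqNext_QUEUEaux (c : ℕ) (l : List E) :
    deqNext (QUEUEaux (c, l)) = QUEUEaux (0, l.tail) := by
  rw [deqNext, dest_QUEUEaux]; rfl

@[simp] theorem step_QUEUEaux (c d : ℕ) (l : List E) :
    step c (QUEUEaux (d, l)) = QUEUEaux (c + d, l) := by
  refine eq_of_bisim ⟨fun x y => ∃ c d l, x = step c (QUEUEaux (d, l)) ∧ y = QUEUEaux (c + d, l),
    ?_, c, d, l, rfl, rfl⟩
  rintro _ _ ⟨c, d, l, rfl, rfl⟩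
  exact ⟨by simp, fun e => ⟨c, d + 1, l ++ [e], by simp [Nat.add_assoc]⟩, by simp, by simp,
    0, 0, l.tail, by simp⟩

@[simp] theorem quit_QUEUE (l : List E) : quit (QUEUE l) = 0 := quit_QUEUEaux 0 l

@[simp] theorem deqCost_QUEUE (l : List E) : deqCost (QUEUE l) = 0 := deqCost_QUEUEaux 0 l

@[simp] theorem deqElem_QUEUE (l : List E) : deqElem (QUEUE l) = l.head? := deqElem_QUEUEaux 0 l

@[simp] theorem enqueue_QUEUE (l : List E) (e : E) :
    enqueue (QUEUE l) e = step 1 (QUEUE (l ++ [e])) := by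
  simp [QUEUE]

@[simp] theorem deqNext_QUEUE (l : List E) : deqNext (QUEUE l) = QUEUE l.tail :=
  deqNext_QUEUEaux 0 l

theorem dest_batchedQueue_cons (bl fl : List E) (e : E) :
    PFunctor.M.dest (batchedQueue (bl, e :: fl)) =
      (⟨(bl.length, 0, some e),
        Option.elim' (batchedQueue (bl, fl)) (fun e' => batchedQueue (e' :: bl, e :: fl))⟩ :
        QueueF E (Queue E)) :=
  (PFunctor.M.dest_corec _ _).trans (congrArg _ (funext (Option.rec rfl fun _ => rfl)))

theorem dest_batchedQueue_nil (bl : List E) :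
    PFunctor.M.dest (batchedQueue (bl, [])) =
      (⟨(bl.length, bl.length, bl.reverse.head?),
        Option.elim' (batchedQueue ([], bl.reverse.tail)) (fun e => batchedQueue (e :: bl, []))⟩ :
        QueueF E (Queue E)) := by
  refine (PFunctor.M.dest_corec _ _).trans ?_
  dsimp only
  rcases h : bl.reverse with _ | ⟨e, fl⟩
  · obtain rfl : bl = [] := List.reverse_eq_nil_iff.mp h
    exact congrArg _ (funext (Option.rec rfl fun _ => rfl))
  · exact congrArg _ (funext (Option.rec rfl fun _ => rfl))

@[simp] theorem quit_batchedQueue (bl fl : List E) : quit (batchedQueue (bl, fl)) = bl.length := by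
  cases fl
  · rw [quit, dest_batchedQueue_nil]
  · rw [quit, dest_batchedQueue_cons]

@[simp] theorem enqueue_batchedQueue (bl fl : List E) (e : E) :
    enqueue (batchedQueue (bl, fl)) e = batchedQueue (e :: bl, fl) := by
  cases fl
  · rw [enqueue, dest_batchedQueue_nil]; rfl
  · rw [enqueue, dest_batchedQueue_cons]; rfl

@[simp] theorem deqCost_batchedQueue_cons (bl fl : List E) (e : E) :
    deqCost (batchedQueue (bl, e :: fl)) = 0 := by
  rw [deqCost, dest_batchedQueue_cons]

@[simp] theorem deqElem_batchedQueue_cons (bl fl : List E) (e : E) :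
    deqElem (batchedQueue (bl, e :: fl)) = some e := by
  rw [deqElem, dest_batchedQueue_cons]

@[simp] theorem deqNext_batchedQueue_cons (bl fl : List E) (e : E) :
    deqNext (batchedQueue (bl, e :: fl)) = batchedQueue (bl, fl) := by
  rw [deqNext, dest_batchedQueue_cons]; rfl

@[simp] theorem deqCost_batchedQueue_nil (bl : List E) :
    deqCost (batchedQueue (bl, [])) = bl.length := by
  rw [deqCost, dest_batchedQueue_nil]

@[simp] theorem deqElem_batchedQueue_nil (bl : List E) :
    deqElem (batchedQueue (bl, [])) = bl.reverse.head? := by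
  rw [deqElem, dest_batchedQueue_nil]

@[simp] theorem deqNext_batchedQueue_nil (bl : List E) :
    deqNext (batchedQueue (bl, [])) = batchedQueue ([], bl.reverse.tail) := by
  rw [deqNext, dest_batchedQueue_nil]; rfl

section UpToStep

def StepClosure (R : Queue E → Queue E → Prop) (q₁ q₂ : Queue E) : Prop :=
  ∃ c p₁ p₂, R p₁ p₂ ∧ q₁ = step c p₁ ∧ q₂ = step c p₂

variable {R : Queue E → Queue E → Prop} {q₁ q₂ : Queue E}

theorem StepClosure.of_rel (h : R q₁ q₂) : StepClosure R q₁ q₂ :=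
  ⟨0, q₁, q₂, h, (step_zero q₁).symm, (step_zero q₂).symm⟩

theorem StepClosure.step (c : ℕ) (h : StepClosure R q₁ q₂) :
    StepClosure R (Queue.step c q₁) (Queue.step c q₂) := by
  obtain ⟨d, p₁, p₂, hp, rfl, rfl⟩ := h
  exact ⟨c + d, p₁, p₂, hp, step_step c d p₁, step_step c d p₂⟩

def IsAmortizedBisimUpToStep (R : Queue E → Queue E → Prop) : Prop :=
  ∀ q₁ q₂, R q₁ q₂ →
    quit q₁ = quit q₂ ∧
    (∀ e, StepClosure R (enqueue q₁ e) (enqueue q₂ e)) ∧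
    deqElem q₁ = deqElem q₂ ∧
    StepClosure R (step (deqCost q₁) (deqNext q₁)) (step (deqCost q₂) (deqNext q₂))

/-- Sound because `step c` adds `c` to both sides' costs and commutes with `enqueue`, while the
`step` taken before `deqNext` merges with the pending one (`step_step`). -/
theorem IsAmortizedBisimUpToStep.isAmortizedBisim_stepClosure
    (hR : IsAmortizedBisimUpToStep R) : IsAmortizedBisim (StepClosure R) := by
  rintro _ _ ⟨c, p₁, p₂, hp, rfl, rfl⟩
  obtain ⟨hquit, henq, helem, hnext⟩ := hR p₁ p₂ hp
  refine ⟨by simp [hquit], fun e => by simpa using (henq e).step c, by simpa using helem, ?_⟩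
  simpa using hnext.step c

theorem IsAmortizedBisimUpToStep.amortEquiv (hR : IsAmortizedBisimUpToStep R) (h : R q₁ q₂) :
    AmortEquiv q₁ q₂ :=
  ⟨StepClosure R, hR.isAmortizedBisim_stepClosure, .of_rel h⟩

end UpToStep

end Queue

theorem batchedQueue_amortized_analysis {E : Type} (bl fl : List E) :
    Queue.AmortEquiv (Queue.batchedQueue (bl, fl))
      (Queue.step bl.length (Queue.QUEUE (fl ++ bl.reverse))) := by
  open Queue in
  refine IsAmortizedBisimUpToStep.amortEquiv
    (R := fun q₁ q₂ => ∃ bl fl : List E,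
      q₁ = batchedQueue (bl, fl) ∧ q₂ = step bl.length (QUEUE (fl ++ bl.reverse)))
    ?_ ⟨bl, fl, rfl, rfl⟩
  rintro _ _ ⟨bl, fl, rfl, rfl⟩
  cases fl with
  | nil =>
    refine ⟨by simp, fun e => .of_rel ⟨e :: bl, [], by simp⟩, by simp, ?_⟩
    simpa using StepClosure.step bl.length (.of_rel ⟨[], bl.reverse.tail, by simp⟩)
  | cons e fl =>
    refine ⟨by simp, fun e' => .of_rel ⟨e' :: bl, e :: fl, by simp⟩, by simp, ?_⟩
    simpa using StepClosure.of_rel ⟨bl, fl, rfl, rfl⟩
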